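/- A function Ω ∈ RS(M) satisfies the fixed-point equation Ω(z) = (zI − Ω(z))(I − zΩ(z))⁻¹ for all z ∈ Z := ℂ ∖ ((−∞,−1] ∪ [1,+∞)) if and only if Ω(z) = (z / (1 + (1 − z²)^{1/2})) · I for all z ∈ Z, where (1 − z²)^{1/2} denotes the principal branch of the square root (note that 1 − z² ∉ (−∞,0] for z ∈ Z). In particular, the transformation Ω ↦ (zI − Ω(z))(I − zΩ(z))⁻¹ of RS(M) has a unique fixed point. -/

import Mathlib

/-!
The fixed-point equation says `Ω(z)(I − zΩ(z)) = zI − Ω(z)`, i.e. `zΩ(z)² − 2Ω(z) + z = 0`, with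
`I − zΩ(z)` invertible. The scalar roots of this quadratic are `w(z) = z/(1 + (1 − z²)^{1/2})` and
`1/w(z)`, so `(Ω(z) − w(z)⁻¹)(Ω(z) − w(z)) = 0`. For real `x ∈ (0,1)` the root `1/w(x)` is real and
exceeds `1`, so it cannot be an eigenvalue of `Ω(x) ≤ I`; hence `Ω(x) = w(x) I`. The domain `Z` is
star-shaped about `0`, so the identity theorem extends this from the real segment to all of `Z`.
Conversely `w(z) I` solves the equation because `1 − z w(z) = (1 − z²)^{1/2} ≠ 0`.
-/

open Complex ContinuousLinearMap

noncomputable section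

variable {M : Type*} [NormedAddCommGroup M] [InnerProductSpace ℂ M] [CompleteSpace M]
  [TopologicalSpace.SeparableSpace M]

/-- The domain `Z = ℂ ∖ ((−∞,−1] ∪ [1,+∞))`. -/
def Zdom : Set ℂ := {z : ℂ | z ∉ (fun x : ℝ => (x : ℂ)) '' (Set.Iic (-1) ∪ Set.Ici 1)}

/-- The combined Nevanlinna–Schur class `RS(M)`. -/
def IsRS (Ω : ℂ → (M →L[ℂ] M)) : Prop :=
  DifferentiableOn ℂ Ω Zdom ∧
  (∀ z ∈ Zdom, Ω (starRingEnd ℂ z) = adjoint (Ω z)) ∧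
  (∀ z ∈ Zdom, z.im ≠ 0 → ∀ f : M, 0 ≤ z.im * (inner ℂ f (Ω z f) : ℂ).im) ∧
  (∀ x : ℝ, -1 < x → x < 1 →
    ((1 : M →L[ℂ] M) - Ω (x : ℂ)).IsPositive ∧ ((1 : M →L[ℂ] M) + Ω (x : ℂ)).IsPositive)

open Filter Topology Function

lemma Zdom_eq : Zdom = {z : ℂ | z.im ≠ 0 ∨ |z.re| < 1} := by
  ext z
  simp only [Zdom, Set.mem_ofPred_eq, Set.mem_image, Set.mem_union, Set.mem_Iic, Set.mem_Ici,
    not_exists, not_and]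
  constructor
  · intro h
    by_contra! hz
    refine h z.re ?_ (Complex.ext rfl (by simp [hz.1]))
    rcases le_abs'.mp hz.2 with h | h <;> [left; right] <;> linarith
  · rintro (h | h) x hx rfl
    · simp at h
    · rw [ofReal_re, abs_lt] at h
      rcases hx with hx | hx <;> linarith [h.1, h.2]

lemma isOpen_Zdom : IsOpen Zdom := by
  rw [Zdom_eq, Set.ofPred_or]
  exact (isOpen_ne_fun continuous_im continuous_const).union
    (isOpen_lt (continuous_abs.comp continuous_re) continuous_const)

lemma ofReal_mem_Zdom {x : ℝ} (hx : |x| < 1) : (x : ℂ) ∈ Zdom := by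
  rw [Zdom_eq]
  exact Or.inr (by simpa using hx)

lemma starConvex_Zdom : StarConvex ℝ 0 Zdom := by
  intro y hy a b _ hb _
  rw [smul_zero, zero_add]
  rw [Zdom_eq] at hy ⊢
  simp only [Set.mem_ofPred_eq, smul_im, smul_re, smul_eq_mul, abs_mul, abs_of_nonneg hb] at hy ⊢
  rcases eq_or_lt_of_le hb with rfl | hb
  · simp
  rcases hy with hy | hy
  · exact Or.inl (mul_ne_zero hb.ne' hy)
  · right
    nlinarith [abs_nonneg y.re]

lemma isPreconnected_Zdom : IsPreconnected Zdom :=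
  (starConvex_Zdom.isPathConnected (ofReal_mem_Zdom (x := 0) (by simp))).isConnected.isPreconnected

lemma one_sub_sq_mem_slitPlane {z : ℂ} (hz : z ∈ Zdom) : 1 - z ^ 2 ∈ slitPlane := by
  rw [Zdom_eq] at hz
  rw [mem_slitPlane_iff]
  simp only [sub_re, one_re, sub_im, one_im, sq, mul_re, mul_im]
  rcases hz with him | hre
  · by_cases hre : z.re = 0
    · left
      rw [hre]
      nlinarith [sq_nonneg z.im]
    · right
      intro h
      exact mul_ne_zero hre him (by linarith)
  · left
    nlinarith [abs_lt.mp hre, sq_nonneg z.im]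

lemma cpow_half_sq (w : ℂ) : (w ^ ((1 : ℂ) / 2)) ^ 2 = w := by
  rw [one_div]
  exact cpow_ofNat_inv_pow w 2

lemma one_add_sqrt_ne_zero (z : ℂ) : 1 + (1 - z ^ 2) ^ ((1 : ℂ) / 2) ≠ 0 := by
  intro h
  have hs : (1 - z ^ 2) ^ ((1 : ℂ) / 2) = -1 := by linear_combination h
  have hz : z = 0 := by
    have hsq := cpow_half_sq (1 - z ^ 2)
    rw [hs] at hsq
    exact pow_eq_zero_iff two_ne_zero |>.mp (by linear_combination hsq)
  subst hz
  norm_num at hs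

/-- The scalar `w(z)`; its denominator never vanishes (`one_add_sqrt_ne_zero`), so `/` is honest. -/
def fixedScalar (z : ℂ) : ℂ := z / (1 + (1 - z ^ 2) ^ ((1 : ℂ) / 2))

lemma one_sub_mul_fixedScalar (z : ℂ) :
    1 - z * fixedScalar z = (1 - z ^ 2) ^ ((1 : ℂ) / 2) := by
  have h := one_add_sqrt_ne_zero z
  have hsq := cpow_half_sq (1 - z ^ 2)
  rw [fixedScalar]
  field_simp
  linear_combination -hsq

lemma fixedScalar_mul_one_sub (z : ℂ) :
    fixedScalar z * (1 - z * fixedScalar z) = z - fixedScalar z := by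
  have h := one_add_sqrt_ne_zero z
  rw [one_sub_mul_fixedScalar, fixedScalar]
  field_simp
  ring

lemma fixedScalar_ofReal {x : ℝ} (hx : x ^ 2 ≤ 1) :
    fixedScalar x = (x / (1 + √(1 - x ^ 2)) : ℝ) := by
  rw [fixedScalar, Real.sqrt_eq_rpow]
  push_cast [ofReal_cpow (by linarith : 0 ≤ 1 - x ^ 2)]
  rfl

lemma differentiableOn_fixedScalar : DifferentiableOn ℂ fixedScalar Zdom := by
  intro z hz
  refine DifferentiableAt.differentiableWithinAt
    (differentiableAt_id.div ((differentiableAt_const _).add ?_) (one_add_sqrt_ne_zero z))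
  exact ((differentiableAt_const _).sub (differentiableAt_id.pow 2)).cpow
    (differentiableAt_const _) (one_sub_sq_mem_slitPlane hz)

section Algebra

variable {𝕜 A : Type*} [Field 𝕜] [Ring A] [Algebra 𝕜 A]

lemma eq_mul_inverse_one_sub_smul_iff {x y : A} {z : 𝕜} :
    x = y * Ring.inverse (1 - z • x) ↔ IsUnit (1 - z • x) ∧ x * (1 - z • x) = y := by
  constructor
  · intro h
    have hu : IsUnit (1 - z • x) := by
      by_contra hu
      rw [Ring.inverse_non_unit _ hu, mul_zero] at h
      exact hu (by rw [h, smul_zero, sub_zero]; exact isUnit_one)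
    exact ⟨hu, (Ring.eq_mul_inverse_iff_mul_eq _ _ _ hu).mp h⟩
  · rintro ⟨hu, h⟩
    exact (Ring.eq_mul_inverse_iff_mul_eq _ _ _ hu).mpr h

lemma smul_one_eq_mul_inverse {c z : 𝕜} (hu : 1 - z * c ≠ 0) (h : c * (1 - z * c) = z - c) :
    (c • 1 : A) = (z • 1 - c • 1) * Ring.inverse (1 - z • c • 1) := by
  have hT : (1 : A) - z • c • 1 = algebraMap 𝕜 A (1 - z * c) := by
    rw [Algebra.algebraMap_eq_smul_one, sub_smul, one_smul, smul_smul]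
  rw [eq_mul_inverse_one_sub_smul_iff, hT]
  refine ⟨hu.isUnit.map _, ?_⟩
  rw [Algebra.algebraMap_eq_smul_one, smul_mul_smul_comm, mul_one, h, sub_smul]

lemma sub_inv_smul_mul_sub_smul_eq_zero {x : A} {z w : 𝕜} (hz : z ≠ 0)
    (hx : x * (1 - z • x) = z • 1 - x) (hw : w * (1 - z * w) = z - w) :
    (x - w⁻¹ • 1) * (x - w • 1) = 0 := by
  have hw0 : w ≠ 0 := by
    rintro rfl
    exact hz (by simpa using hw.symm)
  have hsum : z * (w⁻¹ + w) = 2 := by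
    field_simp
    linear_combination -hw
  rw [mul_sub, mul_one, mul_smul_comm] at hx
  have hzx : z • ((x - w⁻¹ • 1) * (x - w • 1)) = 0 := by
    calc z • ((x - w⁻¹ • 1) * (x - w • 1))
        = z • (x * x) - (z * (w⁻¹ + w)) • x + (z * (w⁻¹ * w)) • 1 := by
          simp only [sub_mul, mul_sub, smul_mul_assoc, mul_smul_comm, one_mul, mul_one]
          module
      _ = 0 := by
          rw [hsum, inv_mul_cancel₀ hw0, mul_one]
          linear_combination (norm := module) -hx
  exact (smul_eq_zero.mp hzx).resolve_left hz

end Algebra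

section Positive

variable {𝕜 E : Type*} [RCLike 𝕜] [NormedAddCommGroup E] [InnerProductSpace 𝕜 E]

lemma injective_sub_smul_one_of_isPositive {T : E →L[𝕜] E} (hT : (1 - T).IsPositive) {a : ℝ}
    (ha : 1 < a) : Injective ⇑(T - (a : 𝕜) • (1 : E →L[𝕜] E)) := by
  rw [injective_iff_map_eq_zero]
  intro f hf
  have hTf : (1 - T) f = ((1 - a : ℝ) : 𝕜) • f := by
    rw [sub_apply, smul_apply, one_apply_eq_self, sub_eq_zero] at hf
    rw [sub_apply, one_apply_eq_self, hf]
    push_cast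
    rw [sub_smul, one_smul]
  have h := hT.re_inner_nonneg_left f
  rw [hTf, inner_smul_left, RCLike.conj_ofReal, inner_self_eq_norm_sq_to_K, ← RCLike.ofReal_pow,
    ← RCLike.ofReal_mul, RCLike.ofReal_re] at h
  have : ‖f‖ ^ 2 ≤ 0 := by nlinarith
  simpa using this

lemma eq_smul_one_of_isPositive_of_mul_eq_zero {T : E →L[𝕜] E} (hT : (1 - T).IsPositive) {a : ℝ}
    (ha : 1 < a) {b : 𝕜} (h : (T - (a : 𝕜) • 1) * (T - b • 1) = 0) : T = b • 1 := by
  rw [← sub_eq_zero]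
  ext f
  exact injective_sub_smul_one_of_isPositive hT ha (by simpa using congr($h f))

end Positive

lemma eq_fixedScalar_smul_one_of_isPositive {E : Type*} [NormedAddCommGroup E]
    [InnerProductSpace ℂ E] {T : E →L[ℂ] E} (hT : (1 - T).IsPositive) {x : ℝ}
    (hx : x ∈ Set.Ioo 0 1) (hfix : T = ((x : ℂ) • 1 - T) * Ring.inverse (1 - (x : ℂ) • T)) :
    T = fixedScalar x • 1 := by
  obtain ⟨hx0, hx1⟩ := hx
  set r := x / (1 + √(1 - x ^ 2))
  have hr : fixedScalar x = r := fixedScalar_ofReal (by nlinarith)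
  have hr0 : 0 < r := by positivity
  have hr1 : 1 < r⁻¹ := (one_lt_inv₀ hr0).mpr <|
    (div_lt_one (by positivity)).mpr (by linarith [Real.sqrt_nonneg (1 - x ^ 2)])
  have hfactor := sub_inv_smul_mul_sub_smul_eq_zero (ofReal_ne_zero.mpr hx0.ne')
    (eq_mul_inverse_one_sub_smul_iff.mp hfix).2 (fixedScalar_mul_one_sub x)
  rw [hr] at hfactor ⊢
  rw [← ofReal_inv] at hfactor
  exact eq_smul_one_of_isPositive_of_mul_eq_zero hT hr1 hfactor

lemma AnalyticOnNhd.eqOn_of_preconnected_of_eventuallyEq_ofReal {E : Type*}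
    [NormedAddCommGroup E] [NormedSpace ℂ E] {f g : ℂ → E} {U : Set ℂ}
    (hf : AnalyticOnNhd ℂ f U) (hg : AnalyticOnNhd ℂ g U) (hU : IsPreconnected U) {x₀ : ℝ}
    (hx₀ : (x₀ : ℂ) ∈ U) (hfg : ∀ᶠ x : ℝ in 𝓝 x₀, f x = g x) : Set.EqOn f g U := by
  have hreal : Tendsto ofReal (𝓝[≠] x₀) (𝓝[≠] (x₀ : ℂ)) :=
    continuous_ofReal.continuousWithinAt.tendsto_nhdsWithin fun _ _ ↦ by simp_all
  exact hf.eqOn_of_preconnected_of_frequently_eq hg hU hx₀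
    (hreal.frequently (hfg.filter_mono nhdsWithin_le_nhds).frequently)

/-- A function `Ω ∈ RS(M)` satisfies the fixed-point equation
`Ω(z) = (zI − Ω(z))(I − zΩ(z))⁻¹` on `Z` iff `Ω(z) = (z/(1 + (1 − z²)^{1/2}))·I` (principal
branch of the square root); in particular the transformation `Φ` has a unique fixed
point in `RS(M)`. -/
theorem fixed_point_of_phi (Ω : ℂ → (M →L[ℂ] M)) (hRS : IsRS Ω) :
    (∀ z ∈ Zdom,
      Ω z = (z • (1 : M →L[ℂ] M) - Ω z) * Ring.inverse (1 - z • Ω z)) ↔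
    (∀ z ∈ Zdom,
      Ω z = (z / (1 + (1 - z ^ 2) ^ ((1 : ℂ) / 2))) • (1 : M →L[ℂ] M)) := by
  refine ⟨fun hfix ↦ ?_, fun h z hz ↦ ?_⟩
  · have hseg : ∀ᶠ x : ℝ in 𝓝 (1 / 2), Ω x = fixedScalar x • 1 := by
      filter_upwards [Ioo_mem_nhds (by norm_num : (0 : ℝ) < 1 / 2)
        (by norm_num : (1 / 2 : ℝ) < 1)] with x hx
      have hx' : |x| < 1 := abs_lt.mpr ⟨by linarith [hx.1], hx.2⟩
      exact eq_fixedScalar_smul_one_of_isPositive (hRS.2.2.2 x (by linarith [hx.1]) hx.2).1 hx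
        (hfix x (ofReal_mem_Zdom hx'))
    exact (hRS.1.analyticOnNhd isOpen_Zdom).eqOn_of_preconnected_of_eventuallyEq_ofReal
      ((differentiableOn_fixedScalar.smul_const 1).analyticOnNhd isOpen_Zdom) isPreconnected_Zdom
      (ofReal_mem_Zdom (by norm_num)) hseg
  · have hsqrt : 1 - z * fixedScalar z ≠ 0 := by
      rw [one_sub_mul_fixedScalar]
      exact cpow_ne_zero_iff.mpr (.inl (slitPlane_ne_zero (one_sub_sq_mem_slitPlane hz)))
    rw [h z hz]
    exact smul_one_eq_mul_inverse hsqrt (fixedScalar_mul_one_sub z)
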